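/- arXiv:2212.06605 — 2 statements merged into one kernel-verified Lean document; each statement's English description precedes it below -/
import Mathlib

section
/- Let A be a random k×d complex matrix whose entries A_{i,j} are independent and identically distributed, each uniform on {1, −1, i, −i} ⊂ ℂ. For x, w ∈ ℝ^d define ρ(x,w) = Re( (1/k) ∑_{i=1}^k ((Ax)_i)² ((Aw)_i)² ), where (Ax)_i = ∑_{j=1}^d A_{i,j} x_j. Then E[ρ(x,w)] = ‖x‖_w² = ∑_{j=1}^d w_j² x_j². -/
/-!
Expanding the squares, `E[((Ax)_i)² ((Aw)_i)²]` is the sum of the terms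
`x_a x_b w_c w_e E[A_ia A_ib A_ic A_ie]`. By independence such a mixed moment factors as
`∏_p E[Z^{m_p}]`, where `m_p` is the multiplicity of `p` among `a, b, c, e`, and a variable
uniform on the fourth roots of unity has `E[Z^m] = 1` if `4 ∣ m` and `0` otherwise. Since the
multiplicities add up to `4`, only the diagonal terms `a = b = c = e` survive, so each of the
`k` rows contributes `∑_j x_j² w_j²`.
-/

open MeasureTheory ProbabilityTheory

/-- A complex random variable uniform on `{1, -1, i, -i}`. -/
def IsUniformFourth {Ω : Type*} [MeasurableSpace Ω] (μ : Measure Ω) (Z : Ω → ℂ) : Prop :=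
  μ (Z ⁻¹' {1}) = 1 / 4 ∧ μ (Z ⁻¹' {-1}) = 1 / 4 ∧
    μ (Z ⁻¹' {Complex.I}) = 1 / 4 ∧ μ (Z ⁻¹' {-Complex.I}) = 1 / 4

/-- The estimator `ρ(x,w) = Re((1/k) ∑_i ((Ax)_i)² ((Aw)_i)²)`. -/
noncomputable def rho {Ω : Type*} {k d : ℕ} (A : Fin k → Fin d → Ω → ℂ)
    (x w : Fin d → ℝ) (ω : Ω) : ℝ :=
  ((1 / (k : ℂ)) * ∑ i, (∑ j, A i j ω * (x j : ℂ)) ^ 2 * (∑ j, A i j ω * (w j : ℂ)) ^ 2).re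

open Complex Finset

noncomputable def fourthRootsOfUnity : Finset ℂ := {1, -1, I, -I}

lemma sum_fourthRootsOfUnity {M : Type*} [AddCommMonoid M] (g : ℂ → M) :
    ∑ s ∈ fourthRootsOfUnity, g s = g 1 + g (-1) + g I + g (-I) := by
  rw [fourthRootsOfUnity, sum_insert (by norm_num [Complex.ext_iff]),
    sum_insert (by norm_num [Complex.ext_iff]), sum_pair (by norm_num [Complex.ext_iff])]
  abel

lemma norm_eq_one_of_mem_fourthRootsOfUnity {s : ℂ} (hs : s ∈ fourthRootsOfUnity) : ‖s‖ = 1 := by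
  simp only [fourthRootsOfUnity, mem_insert, mem_singleton] at hs
  rcases hs with rfl | rfl | rfl | rfl <;> simp

namespace IsUniformFourth

variable {Ω : Type*} [MeasurableSpace Ω] {μ : Measure Ω} {Z : Ω → ℂ}

lemma measure_preimage_singleton (h : IsUniformFourth μ Z) {s : ℂ}
    (hs : s ∈ fourthRootsOfUnity) : μ (Z ⁻¹' {s}) = 1 / 4 := by
  obtain ⟨h1, h2, h3, h4⟩ := h
  simp only [fourthRootsOfUnity, mem_insert, mem_singleton] at hs
  rcases hs with rfl | rfl | rfl | rfl <;> assumption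

variable [IsProbabilityMeasure μ]

lemma ae_mem (h : IsUniformFourth μ Z) (hZ : Measurable Z) :
    ∀ᵐ ω ∂μ, Z ω ∈ fourthRootsOfUnity := by
  have hS : μ (Z ⁻¹' fourthRootsOfUnity) = 1 := by
    rw [← sum_measure_preimage_singleton _ fun s _ => hZ (measurableSet_singleton s),
      sum_congr rfl fun s hs => h.measure_preimage_singleton hs, sum_fourthRootsOfUnity]
    ring_nf
    exact ENNReal.div_mul_cancel (by norm_num) (by norm_num)
  exact ae_iff.2 ((prob_compl_eq_zero_iff (hZ (Finset.measurableSet _))).2 hS)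

lemma integral_comp (h : IsUniformFourth μ Z) (hZ : Measurable Z) {E : Type*}
    [NormedAddCommGroup E] [NormedSpace ℝ E] [CompleteSpace E] (g : ℂ → E) :
    ∫ ω, g (Z ω) ∂μ = (4 : ℝ)⁻¹ • ∑ s ∈ fourthRootsOfUnity, g s := by
  have hfiber : ∀ s, MeasurableSet (Z ⁻¹' {s}) := fun s => hZ (measurableSet_singleton s)
  have hsplit : (fun ω => g (Z ω)) =ᵐ[μ]
      fun ω => ∑ s ∈ fourthRootsOfUnity, (Z ⁻¹' {s}).indicator (fun _ => g s) ω := by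
    filter_upwards [h.ae_mem hZ] with ω hω
    classical
    simp only [Set.indicator_apply, Set.mem_preimage, Set.mem_singleton_iff]
    rw [sum_ite_eq, if_pos hω]
  rw [integral_congr_ae hsplit,
    integral_finsetSum _ fun s _ => (integrable_const _).indicator (hfiber s), smul_sum]
  refine sum_congr rfl fun s hs => ?_
  rw [integral_indicator_const _ (hfiber s), measureReal_def, h.measure_preimage_singleton hs]
  norm_num

lemma integral_pow (h : IsUniformFourth μ Z) (hZ : Measurable Z) (n : ℕ) :
    ∫ ω, Z ω ^ n ∂μ = if 4 ∣ n then 1 else 0 := by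
  rw [h.integral_comp hZ (· ^ n), sum_fourthRootsOfUnity, ← Nat.div_add_mod n 4]
  have hperiod : ∀ z : ℂ, z ^ 4 = 1 → z ^ (4 * (n / 4) + n % 4) = z ^ (n % 4) := fun z hz => by
    rw [pow_add, pow_mul, hz, one_pow, one_mul]
  rw [hperiod 1 (one_pow _), hperiod (-1) (by norm_num), hperiod I I_pow_four,
    hperiod (-I) (by rw [neg_pow, I_pow_four]; norm_num)]
  have hr : n % 4 < 4 := Nat.mod_lt n (by norm_num)
  interval_cases hn : n % 4 <;> norm_num [pow_succ] <;> omega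

end IsUniformFourth

lemma prod_comp_eq_prod_pow_card_fiber {ι T M : Type*} [Fintype ι] [DecidableEq ι] [Fintype T]
    [CommMonoid M] (σ : T → ι) (z : ι → M) :
    ∏ t, z (σ t) = ∏ p, z p ^ #{t | σ t = p} := by
  rw [prod_comp]
  refine prod_subset (subset_univ _) fun p _ hp => ?_
  rw [filter_false_of_mem fun t _ (ht : σ t = p) => hp (ht ▸ mem_image_of_mem σ (mem_univ t)),
    card_empty, pow_zero]

lemma prod_sum_mul_eq_sum_prod {ι T R : Type*} [Fintype ι] [Fintype T] [DecidableEq T]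
    [CommSemiring R] (z : ι → R) (v : T → ι → R) :
    ∏ t, ∑ j, z j * v t j = ∑ σ : T → ι, (∏ t, v t (σ t)) * ∏ t, z (σ t) := by
  rw [Fintype.prod_sum]
  simp_rw [prod_mul_distrib, mul_comm]

lemma forall_four_dvd_card_fiber_iff {ι : Type*} [DecidableEq ι] (σ : Fin 4 → ι) :
    (∀ p, 4 ∣ #{t | σ t = p}) ↔ ∃ p, ∀ t, σ t = p := by
  constructor
  · intro h
    refine ⟨σ 0, fun t => ?_⟩
    have hpos : 0 < #{t | σ t = σ 0} := card_pos.2 ⟨0, by simp⟩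
    have hle : #{t | σ t = σ 0} ≤ 4 := (card_filter_le _ _).trans_eq (card_fin 4)
    have hfull : #{t | σ t = σ 0} = #(univ : Finset (Fin 4)) := by
      rw [card_fin]; obtain ⟨c, hc⟩ := h (σ 0); omega
    have hmem : t ∈ ({t | σ t = σ 0} : Finset (Fin 4)) := by
      rw [eq_univ_of_card _ hfull]; exact mem_univ t
    simpa using hmem
  · rintro ⟨p, hp⟩ q
    by_cases hq : p = q
    · subst hq; simp [hp]
    · simp [hp, hq]

section Independent

variable {Ω ι : Type*} [MeasurableSpace Ω] {μ : Measure Ω} [Fintype ι] {Z : ι → Ω → ℂ}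

lemma integral_prod_comp_eq_prod_integral_pow [DecidableEq ι] (hZ : ∀ p, Measurable (Z p))
    (hind : iIndepFun Z μ) {T : Type*} [Fintype T] (σ : T → ι) :
    ∫ ω, ∏ t, Z (σ t) ω ∂μ = ∏ p, ∫ ω, Z p ω ^ #{t | σ t = p} ∂μ := by
  simp_rw [fun ω => prod_comp_eq_prod_pow_card_fiber σ (Z · ω)]
  exact hind.integral_fun_prod_comp (fun p => (hZ p).aemeasurable)
    fun p => (continuous_pow _).aestronglyMeasurable

variable [IsProbabilityMeasure μ] (hZ : ∀ p, Measurable (Z p))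
  (hunif : ∀ p, IsUniformFourth μ (Z p))
include hZ hunif

lemma integrable_prod_comp {T : Type*} [Fintype T] (σ : T → ι) :
    Integrable (fun ω => ∏ t, Z (σ t) ω) μ := by
  refine .of_bound (by fun_prop) 1 ?_
  filter_upwards [ae_all_iff.2 fun p => (hunif p).ae_mem (hZ p)] with ω hω
  simp [norm_prod, fun p => norm_eq_one_of_mem_fourthRootsOfUnity (hω p)]

lemma integrable_prod_sum_mul {T : Type*} [Fintype T] (v : T → ι → ℂ) :
    Integrable (fun ω => ∏ t, ∑ j, Z j ω * v t j) μ := by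
  classical
  simp_rw [prod_sum_mul_eq_sum_prod]
  exact integrable_finsetSum _ fun σ _ => (integrable_prod_comp hZ hunif σ).const_mul _

lemma integral_prod_four [DecidableEq ι] (hind : iIndepFun Z μ) (σ : Fin 4 → ι) :
    ∫ ω, ∏ t, Z (σ t) ω ∂μ = if ∃ p, ∀ t, σ t = p then 1 else 0 := by
  simp_rw [integral_prod_comp_eq_prod_integral_pow hZ hind σ,
    fun p => (hunif p).integral_pow (hZ p), Fintype.prod_boole, forall_four_dvd_card_fiber_iff]

lemma integral_prod_four_sum_mul (hind : iIndepFun Z μ) (v : Fin 4 → ι → ℂ) :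
    ∫ ω, ∏ t, ∑ j, Z j ω * v t j ∂μ = ∑ j, ∏ t, v t j := by
  classical
  simp_rw [prod_sum_mul_eq_sum_prod]
  rw [integral_finsetSum _ fun σ _ => (integrable_prod_comp hZ hunif σ).const_mul _]
  simp_rw [integral_const_mul, integral_prod_four hZ hunif hind, mul_ite, mul_one, mul_zero]
  have hconst : ({σ | ∃ p, ∀ t, σ t = p} : Finset (Fin 4 → ι)) = univ.image fun p _ => p := by
    ext σ; simp [funext_iff, eq_comm]
  rw [← sum_filter, hconst, sum_image fun p _ q _ h => congrFun h 0]

end Independent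

/-- `E[ρ(x,w)] = ‖x‖_w² = ∑_j w_j² x_j²` for a random `k×d` matrix `A` with
i.i.d. entries uniform on `{1, -1, i, -i}`. -/
theorem stmt_5 (Ω : Type*) [MeasurableSpace Ω] (μ : Measure Ω) [IsProbabilityMeasure μ]
    (k d : ℕ) (hk : 0 < k)
    (A : Fin k → Fin d → Ω → ℂ)
    (hmeas : ∀ i j, Measurable (A i j))
    (hunif : ∀ i j, IsUniformFourth μ (A i j))
    (hindep : iIndepFun (fun p : Fin k × Fin d => A p.1 p.2) μ)
    (x w : Fin d → ℝ) :
    (∫ ω, rho A x w ω ∂μ) = ∑ j, (w j) ^ 2 * (x j) ^ 2 := by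
  set v : Fin 4 → Fin d → ℂ := ![(x ·), (x ·), (w ·), (w ·)]
  have hrho : ∀ ω, rho A x w ω = ((1 / k : ℂ) * ∑ i, ∏ t, ∑ j, A i j ω * v t j).re := by
    intro ω
    unfold rho
    congr 3 with i
    simp [v, Fin.prod_univ_four]
    ring
  have hint : ∀ i, Integrable (fun ω => ∏ t, ∑ j, A i j ω * v t j) μ := fun i =>
    integrable_prod_sum_mul (hmeas i) (hunif i) v
  have hrow : ∀ i, ∫ ω, ∏ t, ∑ j, A i j ω * v t j ∂μ = ∑ j, ∏ t, v t j := fun i =>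
    integral_prod_four_sum_mul (hmeas i) (hunif i)
      (hindep.precomp (g := Prod.mk i) (Prod.mk_right_injective i)) v
  simp_rw [hrho]
  refine (integral_re ((integrable_finsetSum _ fun i _ => hint i).const_mul _)).trans ?_
  rw [integral_const_mul, integral_finsetSum _ fun i _ => hint i]
  simp_rw [hrow]
  simp [v, Fin.prod_univ_four, Nat.cast_ne_zero.2 hk.ne']
  exact sum_congr rfl fun j _ => by ring
end

section
/- For any x, w ∈ ℝ^d: ∑_{(j_1,j_2,j_3)∈I'_{3,d}} ( w_{j_1}² x_{j_2} x_{j_3} + 4 w_{j_1} x_{j_1} w_{j_2} x_{j_3} + x_{j_1}² w_{j_2} w_{j_3} )² ≤ 36 ‖w‖₂⁴ ‖x‖₂⁴. -/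
/-!
By Cauchy–Schwarz with weights `1, 4, 1`, `(a + 4b + c)² ≤ 6 (a² + 4b² + c²)`. Applied to each
summand and after dropping the distinctness constraint, the right-hand side becomes a sum over all
triples of products `f i * g j * h k` in `u = w²` and `v = x²`, which factors into products of
single sums. The diagonal sums `∑ u²`, `∑ u v`, `∑ v²` are at most `(∑ u)²`, `(∑ u)(∑ v)`,
`(∑ v)²`, so each of the weights `6, 24, 6` ends up multiplying `‖w‖⁴ ‖x‖⁴`.
-/

open Finset

lemma Finset.sum_mul_le_sum_mul_sum_of_nonneg {ι R : Type*} [CommSemiring R] [PartialOrder R]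
    [IsOrderedRing R] {s : Finset ι} {f g : ι → R} (hf : ∀ i ∈ s, 0 ≤ f i)
    (hg : ∀ i ∈ s, 0 ≤ g i) :
    ∑ i ∈ s, f i * g i ≤ (∑ i ∈ s, f i) * ∑ i ∈ s, g i := by
  rw [sum_mul_sum]
  refine sum_le_sum fun i hi ↦ ?_
  rw [← mul_sum]
  gcongr
  · exact hf i hi
  · exact single_le_sum hg hi

lemma Fintype.sum_sum_sum_mul_mul {ι R : Type*} [Fintype ι] [CommSemiring R] (f g h : ι → R) :
    ∑ i, ∑ j, ∑ k, f i * g j * h k = (∑ i, f i) * (∑ j, g j) * ∑ k, h k := by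
  rw [sum_mul_sum, sum_mul]
  simp only [sum_mul_sum]

lemma sq_add_four_mul_add_le (a b c : ℝ) :
    (a + 4 * b + c) ^ 2 ≤ 6 * (a ^ 2 + 4 * b ^ 2 + c ^ 2) := by
  nlinarith [sq_nonneg (a - b), sq_nonneg (b - c), sq_nonneg (a - c)]

lemma sum_sum_sum_sq_mul_add_le {ι : Type*} [Fintype ι] {u v : ι → ℝ} (hu : ∀ i, 0 ≤ u i)
    (hv : ∀ i, 0 ≤ v i) :
    ∑ i, ∑ j, ∑ k, (u i ^ 2 * v j * v k + 4 * (u i * v i) * u j * v k + v i ^ 2 * u j * u k) ≤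
      6 * (∑ i, u i) ^ 2 * (∑ i, v i) ^ 2 := by
  simp only [sum_add_distrib]
  rw [Fintype.sum_sum_sum_mul_mul, Fintype.sum_sum_sum_mul_mul, Fintype.sum_sum_sum_mul_mul,
    ← mul_sum]
  have hU : 0 ≤ ∑ i, u i := sum_nonneg fun i _ ↦ hu i
  have hV : 0 ≤ ∑ i, v i := sum_nonneg fun i _ ↦ hv i
  have huu : ∑ i, u i ^ 2 ≤ (∑ i, u i) ^ 2 := sum_sq_le_sq_sum_of_nonneg fun i _ ↦ hu i
  have hvv : ∑ i, v i ^ 2 ≤ (∑ i, v i) ^ 2 := sum_sq_le_sq_sum_of_nonneg fun i _ ↦ hv i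
  have huv : ∑ i, u i * v i ≤ (∑ i, u i) * ∑ i, v i :=
    sum_mul_le_sum_mul_sum_of_nonneg (fun i _ ↦ hu i) (fun i _ ↦ hv i)
  nlinarith [mul_le_mul_of_nonneg_right huu (sq_nonneg (∑ i, v i)),
    mul_le_mul_of_nonneg_right hvv (sq_nonneg (∑ i, u i)),
    mul_le_mul_of_nonneg_right huv (mul_nonneg hU hV)]

/-- for any `x, w ∈ ℝ^d`, summing over triples of pairwise distinct indices,
`∑ (w_{j₁}² x_{j₂} x_{j₃} + 4 w_{j₁} x_{j₁} w_{j₂} x_{j₃} + x_{j₁}² w_{j₂} w_{j₃})²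
  ≤ 36 ‖w‖₂⁴ ‖x‖₂⁴`. -/
theorem stmt_17 (d : ℕ) (x w : Fin d → ℝ) :
    (∑ j₁ : Fin d, ∑ j₂ : Fin d, ∑ j₃ : Fin d,
      if j₁ ≠ j₂ ∧ j₁ ≠ j₃ ∧ j₂ ≠ j₃ then
        ((w j₁) ^ 2 * x j₂ * x j₃ + 4 * w j₁ * x j₁ * w j₂ * x j₃ +
          (x j₁) ^ 2 * w j₂ * w j₃) ^ 2
      else 0) ≤
      36 * Real.sqrt (∑ j, (w j) ^ 2) ^ 4 * Real.sqrt (∑ j, (x j) ^ 2) ^ 4 := by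
  have sqrt_pow_four : ∀ t : ℝ, 0 ≤ t → √t ^ 4 = t ^ 2 := fun t ht ↦ by
    rw [show 4 = 2 * 2 from rfl, pow_mul, Real.sq_sqrt ht]
  rw [sqrt_pow_four _ (by positivity), sqrt_pow_four _ (by positivity)]
  set u := fun j ↦ w j ^ 2
  set v := fun j ↦ x j ^ 2
  calc _ ≤ ∑ j₁, ∑ j₂, ∑ j₃, 6 * (u j₁ ^ 2 * v j₂ * v j₃ + 4 * (u j₁ * v j₁) * u j₂ * v j₃ +
          v j₁ ^ 2 * u j₂ * u j₃) := by
        gcongr with j₁ _ j₂ _ j₃ _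
        split_ifs
        · have := sq_add_four_mul_add_le (w j₁ ^ 2 * x j₂ * x j₃) (w j₁ * x j₁ * w j₂ * x j₃)
            (x j₁ ^ 2 * w j₂ * w j₃)
          simp only [u, v]
          linarith
        · positivity
    _ ≤ 6 * (6 * (∑ j, u j) ^ 2 * (∑ j, v j) ^ 2) := by
        simp only [← mul_sum]
        gcongr
        exact sum_sum_sum_sq_mul_add_le (fun j ↦ sq_nonneg _) (fun j ↦ sq_nonneg _)
    _ = _ := by ring
end
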